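/- Let N ≥ 2 be an integer and let p, q be real numbers with q ≥ 1 > p > 0 and pq < 1. Let (u,v) be a positive radially symmetric solution of the system Δu = v^p, Δv = |∇u|^q in ℝ^N. Then for all r > 0: 0 ≤ r·v'(r)/v(r) ≤ (2+q)/(1−pq); N ≤ r·v(r)^p/u'(r) ≤ N + p(2+q)/(1−pq); and N + q ≤ r·u'(r)^q/v'(r) ≤ N − 2 + (2+q)/(1−pq). -/

import Mathlib

/-!
In divergence form the system reads `(r^(N-1) u')' = r^(N-1) v^p`, `(r^(N-1) v')' = r^(N-1) u'^q`,
so `u', v' > 0`, and a flux `r^(N-1) w'` can be compared with `r^(N-1+m)` whenever its source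
`g` makes `g / r^m` monotone. A bound `r v' ≤ K v` on `(0, r₀]` thus propagates:
`v / r^K` decreases, so `r v^p ≤ (N + pK) u'`; then `u' / r^(1+pK)` decreases, so
`r u'^q ≤ (N + q(1+pK)) v'`; then `v' / r^(1+q(1+pK))` decreases, so `r v' ≤ (2 + q + pqK) v`.
Since `pq < 1`, iterating `K ↦ 2 + q + pqK` from a bound given by compactness converges to
`(2+q)/(1-pq)`, and the intermediate bounds at this `K` are the upper bounds on the other two
quotients. The lower bounds come from the same comparison, using that `v` and `u'/r` increase.
-/

open MeasureTheory Set Filter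

/-- `(u, v)` is a positive radially symmetric solution of `Δu = v^p`, `Δv = |∇u|^q`
in the whole space `ℝ^N`, written in radial coordinates on `[0,∞)`. -/
def IsEntirePositiveRadialSolPow (N : ℕ) (p q : ℝ) (u v : ℝ → ℝ) : Prop :=
  ContDiffOn ℝ 2 u (Set.Ici 0) ∧ ContDiffOn ℝ 2 v (Set.Ici 0) ∧
  (∀ r ∈ Set.Ici (0:ℝ), 0 < u r ∧ 0 < v r) ∧
  deriv u 0 = 0 ∧ deriv v 0 = 0 ∧
  (∀ r ∈ Set.Ioi (0:ℝ),
    deriv (deriv u) r + ((N : ℝ) - 1) / r * deriv u r = v r ^ p) ∧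
  (∀ r ∈ Set.Ioi (0:ℝ),
    deriv (deriv v) r + ((N : ℝ) - 1) / r * deriv v r = |deriv u r| ^ q)

open Real

theorem mul_le_mul_sub_of_div_rpow_le {F f : ℝ → ℝ} {a r : ℝ} (ha : 0 < a + 1) (hr : 0 < r)
    (hF : ContinuousOn F (Icc 0 r)) (hF' : ∀ t ∈ Ioo 0 r, HasDerivAt F (f t) t)
    (hf : ∀ t ∈ Ioo 0 r, f r / r ^ a ≤ f t / t ^ a) :
    r * f r ≤ (a + 1) * (F r - F 0) := by
  -- `F` grows at least as fast as `t ↦ f r * (t / r) ^ a * t / (a + 1)`, which vanishes at `0`.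
  set C := f r / r ^ a / (a + 1) with hC_def
  have hmono : MonotoneOn (fun t => F t - C * t ^ (a + 1)) (Icc 0 r) := by
    refine monotoneOn_of_hasDerivWithinAt_nonneg (convex_Icc 0 r)
      (hF.sub (continuousOn_const.mul (continuous_rpow_const ha.le).continuousOn))
      (f' := fun t => f t - C * ((a + 1) * t ^ (a + 1 - 1))) ?_ ?_ <;> rw [interior_Icc]
    · intro t ht
      exact ((hF' t ht).sub
        ((hasDerivAt_rpow_const (Or.inl ht.1.ne')).const_mul C)).hasDerivWithinAt
    · intro t ht
      have hC : C * ((a + 1) * t ^ (a + 1 - 1)) = f r / r ^ a * t ^ a := by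
        rw [add_sub_cancel_right, hC_def]; field_simp
      rw [hC, sub_nonneg, ← le_div_iff₀ (rpow_pos_of_pos ht.1 a)]
      exact hf t ht
  have h := hmono (left_mem_Icc.2 hr.le) (right_mem_Icc.2 hr.le) hr.le
  have hCr : C * r ^ (a + 1) = r * f r / (a + 1) := by
    rw [rpow_add_one hr.ne', hC_def]; field_simp
  simp only [zero_rpow ha.ne', mul_zero, sub_zero, hCr] at h
  rw [← div_le_iff₀' ha]
  linarith

theorem antitoneOn_div_rpow {y y' : ℝ → ℝ} {a : ℝ} {D : Set ℝ} (hD : Convex ℝ D)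
    (hD0 : D ⊆ Ioi 0) (hy : ∀ t ∈ D, HasDerivAt y (y' t) t)
    (hle : ∀ t ∈ D, t * y' t ≤ a * y t) : AntitoneOn (fun t => y t / t ^ a) D := by
  have hderiv : ∀ t ∈ D, HasDerivAt (fun t => y t / t ^ a)
      ((y' t * t ^ a - y t * (a * t ^ (a - 1))) / (t ^ a) ^ 2) t := fun t ht =>
    (hy t ht).div (hasDerivAt_rpow_const (Or.inl (hD0 ht).ne')) (rpow_pos_of_pos (hD0 ht) a).ne'
  refine antitoneOn_of_hasDerivWithinAt_nonpos hD
    (fun t ht => (hderiv t ht).continuousAt.continuousWithinAt)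
    (fun t ht => (hderiv t (interior_subset ht)).hasDerivWithinAt) fun t ht => ?_
  have htD := interior_subset ht
  have ht : 0 < t := hD0 htD
  have hnum : y' t * t ^ a - y t * (a * t ^ (a - 1)) = t ^ (a - 1) * (t * y' t - a * y t) := by
    rw [rpow_sub_one ht.ne']; field_simp
  rw [hnum]
  exact div_nonpos_of_nonpos_of_nonneg
    (mul_nonpos_of_nonneg_of_nonpos (rpow_nonneg ht.le _) (by linarith [hle t htD]))
    (sq_nonneg _)

theorem monotoneOn_div_rpow {y y' : ℝ → ℝ} {a : ℝ} {D : Set ℝ} (hD : Convex ℝ D)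
    (hD0 : D ⊆ Ioi 0) (hy : ∀ t ∈ D, HasDerivAt y (y' t) t)
    (hle : ∀ t ∈ D, a * y t ≤ t * y' t) : MonotoneOn (fun t => y t / t ^ a) D := by
  have h := antitoneOn_div_rpow (y := -y) (y' := -y') hD hD0 (fun t ht => (hy t ht).neg)
    fun t ht => by simpa using hle t ht
  intro s hs t ht hst
  simpa [neg_div] using h hs ht hst

theorem rpow_div_rpow_mul_le {x y s t a p : ℝ} (hx : 0 ≤ x) (hy : 0 ≤ y) (hs : 0 < s)
    (ht : 0 < t) (hp : 0 ≤ p) (h : x / s ^ a ≤ y / t ^ a) :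
    x ^ p / s ^ (p * a) ≤ y ^ p / t ^ (p * a) := by
  rw [mul_comm p, rpow_mul hs.le, rpow_mul ht.le, ← div_rpow hx (rpow_nonneg hs.le a),
    ← div_rpow hy (rpow_nonneg ht.le a)]
  exact rpow_le_rpow (div_nonneg hx (rpow_nonneg hs.le a)) h hp

theorem IsClosed.div_one_sub_mem_of_add_mul_mem {S : Set ℝ} (hS : IsClosed S) {A θ K : ℝ}
    (hθ₀ : 0 ≤ θ) (hθ₁ : θ < 1) (hK : K ∈ S) (hstep : ∀ x ∈ S, A + θ * x ∈ S) :
    A / (1 - θ) ∈ S := by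
  set M := A / (1 - θ) with hM
  have hfix : A + θ * M = M := by rw [hM]; field_simp [(sub_pos.2 hθ₁).ne']; ring
  have hmem : ∀ n : ℕ, M + θ ^ n * (K - M) ∈ S := by
    intro n
    induction n with
    | zero => simpa using hK
    | succ n ih => convert hstep _ ih using 1; rw [pow_succ]; linear_combination -hfix
  have hlim : Tendsto (fun n : ℕ => M + θ ^ n * (K - M)) atTop (nhds M) := by
    simpa using
      ((tendsto_pow_atTop_nhds_zero_of_lt_one hθ₀ hθ₁).mul_const (K - M)).const_add M
  exact hS.mem_of_tendsto hlim (Eventually.of_forall hmem)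

/-- `w` is the radial profile of a `C²` solution of `Δw = g` in dimension `c`. -/
structure HasRadialLaplacian (c : ℝ) (w g : ℝ → ℝ) : Prop where
  contDiffOn : ContDiffOn ℝ 2 w (Ici 0)
  ode : ∀ r ∈ Ioi (0 : ℝ), deriv (deriv w) r + (c - 1) / r * deriv w r = g r

namespace HasRadialLaplacian

variable {c m r : ℝ} {w g : ℝ → ℝ}

theorem neg (hw : HasRadialLaplacian c w g) : HasRadialLaplacian c (-w) (-g) where
  contDiffOn := hw.contDiffOn.neg
  ode r hr := by
    simp only [deriv.neg', deriv.fun_neg, Pi.neg_apply, ← hw.ode r hr]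
    ring

theorem hasDerivAt (hw : HasRadialLaplacian c w g) (hr : 0 < r) :
    HasDerivAt w (deriv w r) r :=
  ((hw.contDiffOn.contDiffAt (Ici_mem_nhds hr)).differentiableAt (by norm_num)).hasDerivAt

theorem hasDerivAt_deriv (hw : HasRadialLaplacian c w g) (hr : 0 < r) :
    HasDerivAt (deriv w) (deriv (deriv w) r) r :=
  (((hw.contDiffOn.contDiffAt (Ici_mem_nhds hr)).derivWithin (m := 1)
    (by norm_num)).differentiableAt (by norm_num)).hasDerivAt

theorem continuousOn_flux (hw : HasRadialLaplacian c w g) (hc : 1 < c) :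
    ContinuousOn (fun x => x ^ (c - 1) * deriv w x) (Ici 0) := by
  have h := (continuous_rpow_const (sub_pos.2 hc).le).continuousOn.mul
    (hw.contDiffOn.continuousOn_derivWithin (uniqueDiffOn_Ici 0) (by norm_num))
  refine h.congr fun x hx => ?_
  rcases (mem_Ici.1 hx).eq_or_lt with rfl | hx
  · simp [zero_rpow (sub_pos.2 hc).ne']
  · simp only [Pi.mul_apply, derivWithin_of_mem_nhds (Ici_mem_nhds hx)]

theorem hasDerivAt_flux (hw : HasRadialLaplacian c w g) (hr : 0 < r) :
    HasDerivAt (fun x => x ^ (c - 1) * deriv w x) (r ^ (c - 1) * g r) r := by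
  refine ((hasDerivAt_rpow_const (p := c - 1) (Or.inl hr.ne')).mul
    (hw.hasDerivAt_deriv hr)).congr_deriv ?_
  rw [← hw.ode r hr, rpow_sub_one hr.ne', rpow_sub_one hr.ne']
  field_simp
  ring

theorem deriv_pos (hw : HasRadialLaplacian c w g) (hc : 1 < c) (hg : ∀ t ∈ Ioi 0, 0 < g t)
    (hr : 0 < r) : 0 < deriv w r := by
  have hmono : StrictMonoOn (fun x => x ^ (c - 1) * deriv w x) (Icc 0 r) := by
    refine strictMonoOn_of_hasDerivWithinAt_pos (convex_Icc 0 r)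
      (f' := fun t => t ^ (c - 1) * g t) ((hw.continuousOn_flux hc).mono Icc_subset_Ici_self)
      ?_ ?_ <;> rw [interior_Icc]
    · exact fun t ht => (hw.hasDerivAt_flux ht.1).hasDerivWithinAt
    · exact fun t ht => mul_pos (rpow_pos_of_pos ht.1 _) (hg t ht.1)
  have h := hmono (left_mem_Icc.2 hr.le) (right_mem_Icc.2 hr.le) hr
  simp only [zero_rpow (sub_pos.2 hc).ne', zero_mul] at h
  exact pos_of_mul_pos_right h (rpow_nonneg hr.le _)

theorem mul_le_mul_deriv (hw : HasRadialLaplacian c w g) (hc : 1 < c) (hm : 0 ≤ m) (hr : 0 < r)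
    (hg : ∀ t ∈ Ioo 0 r, g r / r ^ m ≤ g t / t ^ m) : r * g r ≤ (c + m) * deriv w r := by
  have hdiv : ∀ t, 0 < t → t ^ (c - 1) * g t / t ^ (c - 1 + m) = g t / t ^ m := fun t ht => by
    rw [rpow_add ht, mul_div_mul_left _ _ (rpow_pos_of_pos ht _).ne']
  have h := mul_le_mul_sub_of_div_rpow_le (a := c - 1 + m) (by linarith) hr
    ((hw.continuousOn_flux hc).mono Icc_subset_Ici_self) (fun t ht => hw.hasDerivAt_flux ht.1)
    fun t ht => by rw [hdiv r hr, hdiv t ht.1]; exact hg t ht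
  simp only [zero_rpow (sub_pos.2 hc).ne', zero_mul, sub_zero] at h
  refine le_of_mul_le_mul_left ?_ (rpow_pos_of_pos hr (c - 1))
  linarith

theorem mul_deriv_le_mul (hw : HasRadialLaplacian c w g) (hc : 1 < c) (hm : 0 ≤ m) (hr : 0 < r)
    (hg : ∀ t ∈ Ioo 0 r, g t / t ^ m ≤ g r / r ^ m) : (c + m) * deriv w r ≤ r * g r := by
  have h := hw.neg.mul_le_mul_deriv hc hm hr fun t ht => by simpa [neg_div] using hg t ht
  simp only [Pi.neg_apply, deriv.neg'] at h
  linarith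

theorem mul_deriv_deriv_le (hw : HasRadialLaplacian c w g) (hr : 0 < r)
    (h : r * g r ≤ (c + m) * deriv w r) : r * deriv (deriv w) r ≤ (1 + m) * deriv w r := by
  have := hw.ode r hr
  field_simp at this
  linarith

theorem le_mul_deriv_deriv (hw : HasRadialLaplacian c w g) (hr : 0 < r)
    (h : (c + m) * deriv w r ≤ r * g r) : (1 + m) * deriv w r ≤ r * deriv (deriv w) r := by
  have := hw.ode r hr
  field_simp at this
  linarith

end HasRadialLaplacian

namespace IsEntirePositiveRadialSolPow

variable {N : ℕ} {p q K r r₀ : ℝ} {u v : ℝ → ℝ}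

theorem v_pos (h : IsEntirePositiveRadialSolPow N p q u v) (hr : 0 ≤ r) : 0 < v r :=
  (h.2.2.1 r hr).2

theorem hasRadialLaplacian_u (h : IsEntirePositiveRadialSolPow N p q u v) :
    HasRadialLaplacian N u fun r => v r ^ p :=
  ⟨h.1, h.2.2.2.2.2.1⟩

theorem deriv_u_pos (h : IsEntirePositiveRadialSolPow N p q u v) (hN : 2 ≤ N) (hr : 0 < r) :
    0 < deriv u r :=
  h.hasRadialLaplacian_u.deriv_pos (Nat.one_lt_cast.2 hN)
    (fun _ ht => rpow_pos_of_pos (h.v_pos (le_of_lt ht)) p) hr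

theorem hasRadialLaplacian_v (h : IsEntirePositiveRadialSolPow N p q u v) (hN : 2 ≤ N) :
    HasRadialLaplacian N v fun r => deriv u r ^ q :=
  ⟨h.2.1, fun r hr => by rw [h.2.2.2.2.2.2 r hr, abs_of_pos (h.deriv_u_pos hN hr)]⟩

theorem deriv_v_pos (h : IsEntirePositiveRadialSolPow N p q u v) (hN : 2 ≤ N) (hr : 0 < r) :
    0 < deriv v r :=
  (h.hasRadialLaplacian_v hN).deriv_pos (Nat.one_lt_cast.2 hN)
    (fun _ ht => rpow_pos_of_pos (h.deriv_u_pos hN ht) q) hr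

theorem monotoneOn_v (h : IsEntirePositiveRadialSolPow N p q u v) (hN : 2 ≤ N) :
    MonotoneOn v (Ici 0) := by
  refine monotoneOn_of_hasDerivWithinAt_nonneg (convex_Ici 0) (f' := deriv v)
    h.2.1.continuousOn ?_ ?_ <;> rw [interior_Ici]
  · exact fun t ht => ((h.hasRadialLaplacian_v hN).hasDerivAt ht).hasDerivWithinAt
  · exact fun t ht => (h.deriv_v_pos hN ht).le

theorem natCast_mul_deriv_u_le (h : IsEntirePositiveRadialSolPow N p q u v) (hN : 2 ≤ N)
    (hp : 0 ≤ p) (hr : 0 < r) : N * deriv u r ≤ r * v r ^ p := by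
  simpa using h.hasRadialLaplacian_u.mul_deriv_le_mul (Nat.one_lt_cast.2 hN) le_rfl hr
    fun t ht => by
      simpa using rpow_le_rpow (h.v_pos ht.1.le).le
        (h.monotoneOn_v hN ht.1.le hr.le ht.2.le) hp

theorem natCast_add_mul_deriv_v_le (h : IsEntirePositiveRadialSolPow N p q u v) (hN : 2 ≤ N)
    (hp : 0 ≤ p) (hq : 0 ≤ q) (hr : 0 < r) : (N + q) * deriv v r ≤ r * deriv u r ^ q := by
  have hmono : MonotoneOn (fun t => deriv u t / t ^ (1 : ℝ)) (Ioi 0) :=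
    monotoneOn_div_rpow (convex_Ioi 0) subset_rfl
      (fun _ ht => h.hasRadialLaplacian_u.hasDerivAt_deriv ht) fun _ ht => by
      simpa using h.hasRadialLaplacian_u.le_mul_deriv_deriv (m := 0) ht
        (by simpa using h.natCast_mul_deriv_u_le hN hp ht)
  refine (h.hasRadialLaplacian_v hN).mul_deriv_le_mul (Nat.one_lt_cast.2 hN) hq hr fun t ht => ?_
  simpa using rpow_div_rpow_mul_le (h.deriv_u_pos hN ht.1).le (h.deriv_u_pos hN hr).le ht.1 hr hq
    (hmono ht.1 hr ht.2.le)

theorem mul_rpow_le_of_forall_mul_deriv_v_le (h : IsEntirePositiveRadialSolPow N p q u v)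
    (hN : 2 ≤ N) (hp : 0 ≤ p) (hK₀ : 0 ≤ K)
    (hK : ∀ s ∈ Ioc 0 r₀, s * deriv v s ≤ K * v s) (hr : r ∈ Ioc 0 r₀) :
    r * v r ^ p ≤ (N + p * K) * deriv u r := by
  have hanti : AntitoneOn (fun t => v t / t ^ K) (Ioc 0 r₀) :=
    antitoneOn_div_rpow (convex_Ioc 0 r₀) Ioc_subset_Ioi_self
      (fun _ ht => (h.hasRadialLaplacian_v hN).hasDerivAt ht.1) hK
  refine h.hasRadialLaplacian_u.mul_le_mul_deriv (Nat.one_lt_cast.2 hN) (mul_nonneg hp hK₀) hr.1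
    fun t ht => ?_
  exact rpow_div_rpow_mul_le (h.v_pos hr.1.le).le (h.v_pos ht.1.le).le hr.1 ht.1 hp
    (hanti ⟨ht.1, ht.2.le.trans hr.2⟩ hr ht.2.le)

theorem mul_deriv_u_rpow_le_of_forall_mul_deriv_v_le
    (h : IsEntirePositiveRadialSolPow N p q u v) (hN : 2 ≤ N) (hp : 0 ≤ p) (hq : 0 ≤ q)
    (hK₀ : 0 ≤ K)
    (hK : ∀ s ∈ Ioc 0 r₀, s * deriv v s ≤ K * v s) (hr : r ∈ Ioc 0 r₀) :
    r * deriv u r ^ q ≤ (N + q * (1 + p * K)) * deriv v r := by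
  have hanti : AntitoneOn (fun t => deriv u t / t ^ (1 + p * K)) (Ioc 0 r₀) :=
    antitoneOn_div_rpow (convex_Ioc 0 r₀) Ioc_subset_Ioi_self
      (fun _ ht => h.hasRadialLaplacian_u.hasDerivAt_deriv ht.1) fun _ ht =>
      h.hasRadialLaplacian_u.mul_deriv_deriv_le ht.1
        (h.mul_rpow_le_of_forall_mul_deriv_v_le hN hp hK₀ hK ht)
  refine (h.hasRadialLaplacian_v hN).mul_le_mul_deriv (Nat.one_lt_cast.2 hN) (by positivity)
    hr.1 fun t ht => ?_
  exact rpow_div_rpow_mul_le (h.deriv_u_pos hN hr.1).le (h.deriv_u_pos hN ht.1).le hr.1 ht.1 hq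
    (hanti ⟨ht.1, ht.2.le.trans hr.2⟩ hr ht.2.le)

theorem mul_deriv_v_le_of_forall_mul_deriv_v_le (h : IsEntirePositiveRadialSolPow N p q u v)
    (hN : 2 ≤ N) (hp : 0 ≤ p) (hq : 0 ≤ q) (hK₀ : 0 ≤ K)
    (hK : ∀ s ∈ Ioc 0 r₀, s * deriv v s ≤ K * v s) (hr : r ∈ Ioc 0 r₀) :
    r * deriv v r ≤ (2 + q + p * q * K) * v r := by
  have hv := h.hasRadialLaplacian_v hN
  have hanti : AntitoneOn (fun t => deriv v t / t ^ (1 + q * (1 + p * K))) (Ioc 0 r₀) :=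
    antitoneOn_div_rpow (convex_Ioc 0 r₀) Ioc_subset_Ioi_self
      (fun _ ht => hv.hasDerivAt_deriv ht.1) fun _ ht =>
      hv.mul_deriv_deriv_le ht.1
        (h.mul_deriv_u_rpow_le_of_forall_mul_deriv_v_le hN hp hq hK₀ hK ht)
  have hcmp := mul_le_mul_sub_of_div_rpow_le (by positivity) hr.1
    (h.2.1.continuousOn.mono Icc_subset_Ici_self) (fun t ht => hv.hasDerivAt ht.1)
    fun t ht => hanti ⟨ht.1, ht.2.le.trans hr.2⟩ hr ht.2.le
  have hv₀ := h.v_pos le_rfl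
  nlinarith [mul_nonneg (mul_nonneg hp hq) hK₀]

theorem exists_forall_mul_deriv_v_le (h : IsEntirePositiveRadialSolPow N p q u v)
    (hN : 2 ≤ N) (hr₀ : 0 < r₀) :
    ∃ K, 0 ≤ K ∧ ∀ s ∈ Ioc 0 r₀, s * deriv v s ≤ K * v s := by
  obtain ⟨B, hB⟩ := isCompact_Icc.exists_bound_of_continuousOn
    ((h.2.1.continuousOn_derivWithin (uniqueDiffOn_Ici 0) (by norm_num)).mono
      (Icc_subset_Ici_self : Icc 0 r₀ ⊆ Ici 0))
  have hv₀ := h.v_pos le_rfl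
  have hB₀ : 0 ≤ B := (norm_nonneg _).trans (hB 0 (left_mem_Icc.2 hr₀.le))
  refine ⟨r₀ * B / v 0, by positivity, fun s hs => ?_⟩
  have hderiv : deriv v s ≤ B := by
    rw [← derivWithin_of_mem_nhds (Ici_mem_nhds hs.1)]
    exact (le_abs_self _).trans (hB s (Ioc_subset_Icc_self hs))
  calc s * deriv v s ≤ r₀ * B :=
        mul_le_mul hs.2 hderiv (h.deriv_v_pos hN hs.1).le hr₀.le
    _ = r₀ * B / v 0 * v 0 := by field_simp
    _ ≤ r₀ * B / v 0 * v s :=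
        mul_le_mul_of_nonneg_left (h.monotoneOn_v hN self_mem_Ici hs.1.le hs.1.le) (by positivity)

theorem mul_deriv_v_le (h : IsEntirePositiveRadialSolPow N p q u v) (hN : 2 ≤ N) (hp : 0 ≤ p)
    (hq : 0 ≤ q) (hpq : p * q < 1) (hr : 0 < r) :
    r * deriv v r ≤ (2 + q) / (1 - p * q) * v r := by
  let S : Set ℝ := {K | 0 ≤ K ∧ ∀ s ∈ Ioc 0 r, s * deriv v s ≤ K * v s}
  have hS : IsClosed S := by
    simp only [S, ofPred_and, ofPred_forall]
    exact (isClosed_le continuous_const continuous_id).inter <| isClosed_iInter fun _ =>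
      isClosed_iInter fun _ => isClosed_le continuous_const (continuous_id.mul continuous_const)
  obtain ⟨K₀, hK₀⟩ := h.exists_forall_mul_deriv_v_le hN hr
  have hM := hS.div_one_sub_mem_of_add_mul_mem (mul_nonneg hp hq) hpq hK₀ fun K hK =>
    ⟨by have := hK.1; positivity,
      fun s hs => h.mul_deriv_v_le_of_forall_mul_deriv_v_le hN hp hq hK.1 hK.2 hs⟩
  exact hM.2 r ⟨hr, le_rfl⟩

end IsEntirePositiveRadialSolPow

theorem entire_quotient_bounds_general (N : ℕ) (hN : 2 ≤ N) (p q : ℝ)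
    (hq : 1 ≤ q) (hp : 0 < p) (hpq : p * q < 1)
    (u v : ℝ → ℝ) (huv : IsEntirePositiveRadialSolPow N p q u v) :
    ∀ r : ℝ, 0 < r →
      (0 ≤ r * deriv v r / v r ∧ r * deriv v r / v r ≤ (2 + q) / (1 - p * q)) ∧
      ((N : ℝ) ≤ r * v r ^ p / deriv u r ∧
        r * v r ^ p / deriv u r ≤ (N : ℝ) + p * (2 + q) / (1 - p * q)) ∧
      ((N : ℝ) + q ≤ r * deriv u r ^ q / deriv v r ∧
        r * deriv u r ^ q / deriv v r ≤ (N : ℝ) - 2 + (2 + q) / (1 - p * q)) := by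
  intro r hr
  have hq₀ : 0 ≤ q := zero_le_one.trans hq
  have hv := huv.v_pos hr.le
  have hu' := huv.deriv_u_pos hN hr
  have hv' := huv.deriv_v_pos hN hr
  have hY : ∀ s ∈ Ioc 0 r, s * deriv v s ≤ (2 + q) / (1 - p * q) * v s := fun s hs =>
    huv.mul_deriv_v_le hN hp.le hq₀ hpq hs.1
  have hM : 0 ≤ (2 + q) / (1 - p * q) := div_nonneg (by linarith) (by linarith)
  have hZ := huv.mul_rpow_le_of_forall_mul_deriv_v_le hN hp.le hM hY ⟨hr, le_rfl⟩
  have hW := huv.mul_deriv_u_rpow_le_of_forall_mul_deriv_v_le hN hp.le hq₀ hM hY ⟨hr, le_rfl⟩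
  have hW_eq :
      (N : ℝ) + q * (1 + p * ((2 + q) / (1 - p * q))) = N - 2 + (2 + q) / (1 - p * q) := by
    linear_combination -(div_mul_cancel₀ (2 + q) (sub_pos.2 hpq).ne')
  refine ⟨⟨by positivity, (div_le_iff₀ hv).2 (hY r ⟨hr, le_rfl⟩)⟩,
    ⟨(le_div_iff₀ hu').2 (huv.natCast_mul_deriv_u_le hN hp.le hr), (div_le_iff₀ hu').2 ?_⟩,
    ⟨(le_div_iff₀ hv').2 (huv.natCast_add_mul_deriv_v_le hN hp.le hq₀ hr),
      (div_le_iff₀ hv').2 ?_⟩⟩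
  · rwa [mul_div_assoc]
  · rwa [← hW_eq]

/-- A priori bounds on the quantities `Y = r v'/v`, `Z = r v^p/u'`, `W = r u'^q/v'`
associated to a positive radially symmetric entire solution of
`Δu = v^p`, `Δv = |∇u|^q` in `ℝ^N` when `q ≥ 1 > p > 0` and `pq < 1`. -/
theorem entire_quotient_bounds (N : ℕ) (hN : 2 ≤ N) (p q : ℝ)
    (hq : 1 ≤ q) (hp1 : p < 1) (hp : 0 < p) (hpq : p * q < 1)
    (u v : ℝ → ℝ) (huv : IsEntirePositiveRadialSolPow N p q u v) :
    ∀ r : ℝ, 0 < r →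
      (0 ≤ r * deriv v r / v r ∧ r * deriv v r / v r ≤ (2 + q) / (1 - p * q)) ∧
      ((N : ℝ) ≤ r * v r ^ p / deriv u r ∧
        r * v r ^ p / deriv u r ≤ (N : ℝ) + p * (2 + q) / (1 - p * q)) ∧
      ((N : ℝ) + q ≤ r * deriv u r ^ q / deriv v r ∧
        r * deriv u r ^ q / deriv v r ≤ (N : ℝ) - 2 + (2 + q) / (1 - p * q)) :=
  entire_quotient_bounds_general N hN p q hq hp hpq u v huv
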